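/- Let C₃ ≥ 0, r₀ > 0 and ρ ≥ 0, and let n : (0,∞) → ℝ satisfy 0 ≤ n(r) ≤ √r + C₃ for all r > 0 and n(r) = 0 for 0 < r < r₀. Then ∫_0^∞ n(ρ s) / (s(s+1)) ds ≤ π√ρ + C₃·log(1 + ρ/r₀). -/

import Mathlib

open Real MeasureTheory Set Filter Topology

lemma sqrt_tendsto_atTop : Tendsto Real.sqrt atTop atTop := by
  apply tendsto_atTop_atTop.2
  intro b
  refine ⟨b ^ 2, fun a ha => ?_⟩
  calc b ≤ |b| := le_abs_self b
    _ = Real.sqrt (b ^ 2) := (Real.sqrt_sq_eq_abs b).symm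
    _ ≤ Real.sqrt a := Real.sqrt_le_sqrt ha

lemma arctan_prim_deriv {x : ℝ} (hx : 0 < x) :
    HasDerivAt (fun s => 2 * Real.arctan (Real.sqrt s))
      (1 / (Real.sqrt x * (x + 1))) x := by
  have h1 := (Real.hasDerivAt_arctan (Real.sqrt x)).comp x (Real.hasDerivAt_sqrt hx.ne')
  have h2 := h1.const_mul 2
  refine h2.congr_deriv ?_
  have hs : Real.sqrt x ^ 2 = x := Real.sq_sqrt hx.le
  have hs' : Real.sqrt x ≠ 0 := by positivity
  rw [hs]
  field_simp
  ring

lemma arctan_prim_tendsto :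
    Tendsto (fun s => 2 * Real.arctan (Real.sqrt s)) atTop (𝓝 π) := by
  have h1 : Tendsto Real.arctan atTop (𝓝 (π / 2)) :=
    Real.tendsto_arctan_atTop.mono_right nhdsWithin_le_nhds
  have h2 := (h1.comp sqrt_tendsto_atTop).const_mul (2:ℝ)
  convert h2 using 2
  · rfl
  · ring

lemma sqrt_int_eq : ∫ s in Ioi (0:ℝ), 1 / (Real.sqrt s * (s + 1)) = π := by
  have h := integral_Ioi_of_hasDerivAt_of_nonneg (a := 0)
    (g := fun s => 2 * Real.arctan (Real.sqrt s))
    (g' := fun s => 1 / (Real.sqrt s * (s + 1)))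
    ((continuous_const.mul (Real.continuous_arctan.comp Real.continuous_sqrt)).continuousWithinAt)
    (fun x hx => arctan_prim_deriv hx)
    (fun x hx => div_nonneg zero_le_one
      (mul_nonneg (Real.sqrt_nonneg x) (by linarith [hx.out])))
    arctan_prim_tendsto
  rw [h]
  simp

lemma sqrt_int_integrable : IntegrableOn (fun s => 1 / (Real.sqrt s * (s + 1))) (Ioi (0:ℝ)) :=
  integrableOn_Ioi_deriv_of_nonneg
    ((continuous_const.mul (Real.continuous_arctan.comp Real.continuous_sqrt)).continuousWithinAt)
    (fun x hx => arctan_prim_deriv hx)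
    (fun x hx => div_nonneg zero_le_one
      (mul_nonneg (Real.sqrt_nonneg x) (by linarith [hx.out])))
    arctan_prim_tendsto

lemma log_prim_deriv {x : ℝ} (hx : 0 < x) :
    HasDerivAt (fun s : ℝ => Real.log s - Real.log (s + 1))
      (1 / (x * (x + 1))) x := by
  have h1 := Real.hasDerivAt_log hx.ne'
  have h2 : HasDerivAt (fun s : ℝ => Real.log (s + 1)) (x + 1)⁻¹ x := by
    have := (Real.hasDerivAt_log (by positivity : (x + 1) ≠ 0)).comp x
      ((hasDerivAt_id x).add_const 1)
    exact this.congr_deriv (mul_one _)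
  refine (h1.sub h2).congr_deriv ?_
  field_simp
  ring

lemma log_prim_tendsto :
    Tendsto (fun s : ℝ => Real.log s - Real.log (s + 1)) atTop (𝓝 0) := by
  have h1 : Tendsto (fun s : ℝ => 1 + s⁻¹) atTop (𝓝 1) := by
    have := tendsto_inv_atTop_zero (𝕜 := ℝ)
    have h := this.const_add (1:ℝ)
    simpa using h
  have h2 : Tendsto (fun s : ℝ => Real.log (1 + s⁻¹)) atTop (𝓝 0) := by
    have := (Real.continuousAt_log one_ne_zero).tendsto.comp h1
    rw [Real.log_one] at this
    exact this
  have h3 := h2.neg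
  rw [neg_zero] at h3
  apply h3.congr'
  filter_upwards [eventually_gt_atTop (0:ℝ)] with s hs
  have h4 : (1 : ℝ) + s⁻¹ = (s + 1) / s := by field_simp
  rw [h4, Real.log_div (by positivity) hs.ne']
  ring

lemma log_int_eq {a : ℝ} (ha : 0 < a) :
    ∫ s in Ioi a, 1 / (s * (s + 1)) = Real.log (1 + 1 / a) := by
  have h := integral_Ioi_of_hasDerivAt_of_nonneg (a := a)
    (g := fun s => Real.log s - Real.log (s + 1))
    (g' := fun s => 1 / (s * (s + 1)))
    ((log_prim_deriv ha).continuousAt.continuousWithinAt)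
    (fun x hx => log_prim_deriv (ha.trans hx))
    (fun x hx => div_nonneg zero_le_one
      (by nlinarith [ha.trans hx.out]))
    log_prim_tendsto
  rw [h]
  rw [show (1:ℝ) + 1 / a = (a + 1) / a by field_simp]
  rw [Real.log_div (by positivity) ha.ne']
  ring

lemma log_int_integrable {a : ℝ} (ha : 0 < a) :
    IntegrableOn (fun s => 1 / (s * (s + 1))) (Ioi a) :=
  integrableOn_Ioi_deriv_of_nonneg
    ((log_prim_deriv ha).continuousAt.continuousWithinAt)
    (fun x hx => log_prim_deriv (ha.trans hx))
    (fun x hx => div_nonneg zero_le_one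
      (by nlinarith [ha.trans hx.out]))
    log_prim_tendsto

lemma not_integrable_inv_mul :
    ¬ IntegrableOn (fun s : ℝ => 1 / (s * (s + 1))) (Ioi (0:ℝ)) := by
  intro h
  have h1 : IntegrableOn (fun s : ℝ => 1 / (s * (s + 1))) (Ioo (0:ℝ) 1) :=
    h.mono_set Ioo_subset_Ioi_self
  have h2 : IntegrableOn (fun x : ℝ => (2:ℝ)⁻¹ * x⁻¹) (Ioo (0:ℝ) 1) := by
    refine Integrable.mono' h1 (measurable_inv.const_mul _).aestronglyMeasurable ?_
    rw [ae_restrict_iff' measurableSet_Ioo]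
    filter_upwards with x
    intro hx
    have hx0 : 0 < x := hx.1
    rw [Real.norm_eq_abs, abs_of_nonneg (by positivity)]
    have hle : x * (x + 1) ≤ 2 * x := by nlinarith [hx.2]
    calc (2:ℝ)⁻¹ * x⁻¹ = 1 / (2 * x) := by rw [one_div, mul_inv]
      _ ≤ 1 / (x * (x + 1)) := one_div_le_one_div_of_le (by positivity) hle
  have h3 : IntegrableOn (fun x : ℝ => x⁻¹) (Ioo (0:ℝ) 1) := by
    have h4 := h2.const_mul (2:ℝ)
    refine h4.congr ?_
    filter_upwards with x
    ring
  have h4 : IntegrableOn (fun x : ℝ => x ^ (-1 : ℝ)) (Ioo (0:ℝ) 1) := by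
    simpa [Real.rpow_neg_one] using h3
  rw [intervalIntegral.integrableOn_Ioo_rpow_iff zero_lt_one] at h4
  linarith

/-- **Integral bound via a counting function:** if `0 ≤ n(r) ≤ √r + C₃` for `r > 0` and
`n(r) = 0` for `0 < r < r₀`, then for every `ρ ≥ 0`,
`∫_0^∞ n(ρs)/(s(s+1)) ds ≤ π√ρ + C₃ log(1 + ρ/r₀)`. -/
theorem counting_function_integral_bound
    (C₃ r₀ ρ : ℝ) (hC₃ : 0 ≤ C₃) (hr₀ : 0 < r₀) (hρ : 0 ≤ ρ)
    (n : ℝ → ℝ)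
    (hn : ∀ r : ℝ, 0 < r → 0 ≤ n r ∧ n r ≤ Real.sqrt r + C₃)
    (hn0 : ∀ r : ℝ, 0 < r → r < r₀ → n r = 0) :
    ∫ s in Ioi (0:ℝ), n (ρ * s) / (s * (s + 1)) ≤ π * Real.sqrt ρ + C₃ * Real.log (1 + ρ / r₀) := by
  have hlog : 0 ≤ Real.log (1 + ρ / r₀) :=
    Real.log_nonneg (by nlinarith [div_nonneg hρ hr₀.le])
  have hRHS : 0 ≤ π * Real.sqrt ρ + C₃ * Real.log (1 + ρ / r₀) :=
    add_nonneg (mul_nonneg Real.pi_pos.le (Real.sqrt_nonneg _)) (mul_nonneg hC₃ hlog)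
  rcases eq_or_lt_of_le hρ with hρ0 | hρpos
  · -- case ρ = 0
    have hρ0' : ρ = 0 := hρ0.symm
    subst hρ0'
    simp only [zero_mul]
    by_cases hc : n 0 = 0
    · simpa [hc] using hRHS
    · have hni : ¬ Integrable (fun s : ℝ => n 0 / (s * (s + 1)))
          (volume.restrict (Ioi (0:ℝ))) := by
        intro hint
        apply not_integrable_inv_mul
        have h2 := hint.const_mul (n 0)⁻¹
        refine h2.congr ?_
        filter_upwards with s
        field_simp
      rw [integral_undef hni]
      exact hRHS
  · -- case ρ > 0
    set a := r₀ / ρ with ha_def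
    have ha : 0 < a := div_pos hr₀ hρpos
    set h : ℝ → ℝ := fun s => Real.sqrt ρ * (1 / (Real.sqrt s * (s + 1))) +
      C₃ * Set.indicator (Ici a) (fun s => 1 / (s * (s + 1))) s with hh
    -- integrability of the two pieces
    have hint1 : IntegrableOn (fun s => Real.sqrt ρ * (1 / (Real.sqrt s * (s + 1))))
        (Ioi (0:ℝ)) := sqrt_int_integrable.const_mul _
    have hIciIoi : Ici a ∩ Ioi (0:ℝ) = Ici a :=
      Set.inter_eq_left.mpr (fun x hx => lt_of_lt_of_le ha hx)
    have hindint : IntegrableOn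
        (fun s => Set.indicator (Ici a) (fun s : ℝ => 1 / (s * (s + 1))) s) (Ioi (0:ℝ)) := by
      rw [IntegrableOn, integrable_indicator_iff measurableSet_Ici, IntegrableOn,
        Measure.restrict_restrict measurableSet_Ici, hIciIoi]
      rw [← IntegrableOn, integrableOn_Ici_iff_integrableOn_Ioi]
      exact log_int_integrable ha
    have hint2 : IntegrableOn
        (fun s => C₃ * Set.indicator (Ici a) (fun s : ℝ => 1 / (s * (s + 1))) s)
        (Ioi (0:ℝ)) := hindint.const_mul _
    have hinth : IntegrableOn h (Ioi (0:ℝ)) := hint1.add hint2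
    -- value of ∫ h
    have hval : ∫ s in Ioi (0:ℝ), h s = π * Real.sqrt ρ + C₃ * Real.log (1 + ρ / r₀) := by
      rw [hh, integral_add hint1 hint2, integral_const_mul, integral_const_mul, sqrt_int_eq]
      rw [setIntegral_indicator measurableSet_Ici]
      rw [show Ioi (0:ℝ) ∩ Ici a = Ici a from
        Set.inter_eq_right.mpr (fun x hx => lt_of_lt_of_le ha hx)]
      rw [integral_Ici_eq_integral_Ioi, log_int_eq ha]
      rw [show (1:ℝ) / a = ρ / r₀ from one_div_div r₀ ρ]
      ring
    -- pointwise bound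
    have hle : ∀ s ∈ Ioi (0:ℝ), n (ρ * s) / (s * (s + 1)) ≤ h s := by
      intro s hs
      have hs0 : 0 < s := hs
      have hρs : 0 < ρ * s := mul_pos hρpos hs0
      obtain ⟨hn1, hn2⟩ := hn _ hρs
      have hden : 0 < s * (s + 1) := by positivity
      by_cases hcase : a ≤ s
      · have hind : Set.indicator (Ici a) (fun s : ℝ => 1 / (s * (s + 1))) s
            = 1 / (s * (s + 1)) := Set.indicator_of_mem hcase _
        have hss : Real.sqrt s * Real.sqrt s = s := Real.mul_self_sqrt hs0.le
        have hsne : Real.sqrt s ≠ 0 := by positivity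
        have key : Real.sqrt ρ * (1 / (Real.sqrt s * (s + 1)))
            = Real.sqrt (ρ * s) / (s * (s + 1)) := by
          rw [Real.sqrt_mul hρpos.le, eq_div_iff hden.ne']
          field_simp
          linear_combination -hss
        show n (ρ * s) / (s * (s + 1)) ≤ Real.sqrt ρ * (1 / (Real.sqrt s * (s + 1))) +
          C₃ * Set.indicator (Ici a) (fun s : ℝ => 1 / (s * (s + 1))) s
        rw [hind, key, mul_one_div, ← add_div]
        gcongr
      · push_neg at hcase
        have hlt : ρ * s < r₀ := by
          have := (lt_div_iff₀ hρpos).mp hcase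
          linarith [mul_comm s ρ]
        rw [hn0 _ hρs hlt, zero_div, hh]
        apply add_nonneg
        · exact mul_nonneg (Real.sqrt_nonneg _)
            (div_nonneg zero_le_one (mul_nonneg (Real.sqrt_nonneg _) (by linarith)))
        · exact mul_nonneg hC₃ (Set.indicator_nonneg
            (fun x hx => div_nonneg zero_le_one (by nlinarith [lt_of_lt_of_le ha hx])) s)
    by_cases hI : IntegrableOn (fun s => n (ρ * s) / (s * (s + 1))) (Ioi (0:ℝ))
    · calc ∫ s in Ioi (0:ℝ), n (ρ * s) / (s * (s + 1))
          ≤ ∫ s in Ioi (0:ℝ), h s :=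
            setIntegral_mono_on hI hinth measurableSet_Ioi hle
        _ = _ := hval
    · rw [integral_undef hI]
      exact hRHS
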